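/- arXiv:2005.10909 — 4 statements merged into one kernel-verified Lean document; each statement's English description precedes it below -/
import Mathlib

section
/- Let 1 ≤ p < +∞. If f : [0,1) → ℂ is continuously differentiable on [0,1) and belongs to L^p([0,1]), then (∫₀¹ |f(x)|^p dx)^{1/p} ≤ p·(∫₀¹ |f'(x)|^p (1-x)^p dx)^{1/p} + |f(0)|. -/
/-! Since `f x - f 0 = ∫₀ˣ f'`, Minkowski's inequality in `L^p(0,1]` reduces the claim to the
Hardy-type inequality `∫₀¹ (∫₀ˣ g)^p dx ≤ p^p ∫₀¹ g(t)^p (1-t)^p dt` for `g ≥ 0`. For fixed `x`,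
Hölder's inequality against a power of `1 - t` gives
`(∫₀ˣ g)^p ≤ p^(p-1) (1-x)^(1/p-1) ∫₀ˣ g(t)^p (1-t)^(p-1/p) dt`; integrating in `x` and exchanging
the integrals, the `x`-integral `∫ₜ¹ (1-x)^(1/p-1) dx = p (1-t)^(1/p)` restores the weight
`(1-t)^p`. -/

open MeasureTheory Set
open scoped ENNReal

lemma ae_restrict_Ioc_mem_Ioo {a b : ℝ} : ∀ᵐ x ∂volume.restrict (Ioc a b), x ∈ Ioo a b := by
  rw [← restrict_Ioo_eq_restrict_Ioc]
  exact ae_restrict_mem measurableSet_Ioo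

lemma aemeasurable_restrict_Ioc_of_continuousOn_Ioo {E : Type*} [TopologicalSpace E]
    [MeasurableSpace E] [BorelSpace E] {f : ℝ → E} {a b : ℝ}
    (hf : ContinuousOn f (Ioo a b)) : AEMeasurable f (volume.restrict (Ioc a b)) := by
  rw [← restrict_Ioo_eq_restrict_Ioc]
  exact hf.aemeasurable measurableSet_Ioo

lemma lintegral_Ioc_one_sub_rpow {a b r : ℝ} (hab : a ≤ b) (hb : b ≤ 1)
    (hr : -1 < r ∨ r ≠ -1 ∧ b < 1) :
    ∫⁻ t in Ioc a b, ENNReal.ofReal ((1 - t) ^ r) =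
      ENNReal.ofReal (((1 - a) ^ (r + 1) - (1 - b) ^ (r + 1)) / (r + 1)) := by
  have hr' : -1 < r ∨ r ≠ -1 ∧ (0 : ℝ) ∉ uIcc (1 - b) (1 - a) := by
    refine hr.imp_right fun ⟨hr, hb⟩ => ⟨hr, fun h0 => ?_⟩
    rw [uIcc_of_le (by linarith)] at h0
    linarith [h0.1]
  have hint : IntervalIntegrable (fun u : ℝ => u ^ r) volume (1 - b) (1 - a) := by
    rcases hr' with hr' | ⟨-, h0⟩
    · exact intervalIntegral.intervalIntegrable_rpow' hr'
    · exact intervalIntegral.intervalIntegrable_rpow (Or.inr h0)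
  have hint' : IntegrableOn (fun t : ℝ => (1 - t) ^ r) (Ioc a b) := by
    rw [← intervalIntegrable_iff_integrableOn_Ioc_of_le hab]
    simpa using (hint.comp_sub_left 1).symm
  rw [← ofReal_integral_eq_lintegral_ofReal hint', ← intervalIntegral.integral_of_le hab,
    intervalIntegral.integral_comp_sub_left (fun u => u ^ r), integral_rpow hr']
  filter_upwards [ae_restrict_mem measurableSet_Ioc] with t ht
  exact Real.rpow_nonneg (by linarith [ht.2]) r

lemma rpow_lintegral_Ioc_le {p : ℝ} (hp : 1 ≤ p) {a x : ℝ} (hax : a ≤ x) (hx : x < 1)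
    {g : ℝ → ℝ≥0∞} (hg : AEMeasurable g (volume.restrict (Ioc a x))) :
    (∫⁻ t in Ioc a x, g t) ^ p ≤ ENNReal.ofReal (p ^ (p - 1)) *
      (ENNReal.ofReal ((1 - x) ^ (1 / p - 1)) *
        ∫⁻ t in Ioc a x, g t ^ p * ENNReal.ofReal ((1 - t) ^ (p - 1 / p))) := by
  rcases hp.eq_or_lt with rfl | hp1
  · simp
  have hp0 : 0 < p := by linarith
  set q := p / (p - 1)
  have hpq : p.HolderConjugate q := .conjExponent hp1
  have h1x : 0 < 1 - x := by linarith
  have h1t : ∀ t ∈ Ioc a x, 0 < 1 - t := fun t ht => by linarith [ht.2]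
  -- `β` is chosen so that `(g * w)^p` carries the weight `(1-t)^(p-1/p)` and
  -- `w'^q = (1-t)^(-(p+1)/p)`, whose integral over `(a, x]` is at most `p (1-x)^(-1/p)`.
  set β := 1 - 1 / p ^ 2
  set w : ℝ → ℝ≥0∞ := fun t => ENNReal.ofReal ((1 - t) ^ β)
  set w' : ℝ → ℝ≥0∞ := fun t => ENNReal.ofReal ((1 - t) ^ (-β))
  have hsplit : ∫⁻ t in Ioc a x, g t = ∫⁻ t in Ioc a x, (g * w) t * w' t := by
    refine setLIntegral_congr_fun measurableSet_Ioc fun t ht => ?_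
    simp only [Pi.mul_apply, w, w', mul_assoc]
    rw [← ENNReal.ofReal_mul (Real.rpow_nonneg (h1t t ht).le β), ← Real.rpow_add (h1t t ht),
      add_neg_cancel, Real.rpow_zero, ENNReal.ofReal_one, mul_one]
  have hgw : ∫⁻ t in Ioc a x, (g * w) t ^ p =
      ∫⁻ t in Ioc a x, g t ^ p * ENNReal.ofReal ((1 - t) ^ (p - 1 / p)) := by
    refine setLIntegral_congr_fun measurableSet_Ioc fun t ht => ?_
    have hβp : β * p = p - 1 / p := by simp only [β]; field_simp
    rw [Pi.mul_apply, ENNReal.mul_rpow_of_nonneg _ _ hp0.le, ENNReal.ofReal_rpow_of_pos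
      (Real.rpow_pos_of_pos (h1t t ht) β), ← Real.rpow_mul (h1t t ht).le, hβp]
  have hw' : ∫⁻ t in Ioc a x, w' t ^ q ≤ ENNReal.ofReal (p * (1 - x) ^ (-(1 / p))) := by
    have hβq : -β * q = -((p + 1) / p) := by
      simp only [β, q]; field_simp; ring
    have hne : -((p + 1) / p) ≠ -1 := by
      rw [Ne, neg_inj, div_eq_one_iff_eq hp0.ne']; linarith
    calc ∫⁻ t in Ioc a x, w' t ^ q
        = ∫⁻ t in Ioc a x, ENNReal.ofReal ((1 - t) ^ (-((p + 1) / p))) := by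
          refine setLIntegral_congr_fun measurableSet_Ioc fun t ht => ?_
          rw [ENNReal.ofReal_rpow_of_pos (Real.rpow_pos_of_pos (h1t t ht) _),
            ← Real.rpow_mul (h1t t ht).le, hβq]
      _ = ENNReal.ofReal (p * (1 - x) ^ (-(1 / p)) - p * (1 - a) ^ (-(1 / p))) := by
          rw [lintegral_Ioc_one_sub_rpow hax hx.le (Or.inr ⟨hne, hx⟩)]
          congr 1
          rw [show -((p + 1) / p) + 1 = -(1 / p) by field_simp; ring]
          field_simp
          ring
      _ ≤ _ := ENNReal.ofReal_le_ofReal (by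
          have := Real.rpow_nonneg (show 0 ≤ 1 - a by linarith) (-(1 / p))
          nlinarith)
  have hqp : 1 / q * p = p - 1 := by simp only [q]; field_simp
  have hA : 0 < (1 - x) ^ (-(1 / p)) := Real.rpow_pos_of_pos h1x _
  calc (∫⁻ t in Ioc a x, g t) ^ p
      ≤ ((∫⁻ t in Ioc a x, (g * w) t ^ p) ^ (1 / p)
          * (∫⁻ t in Ioc a x, w' t ^ q) ^ (1 / q)) ^ p := by
        rw [hsplit]
        exact ENNReal.rpow_le_rpow (ENNReal.lintegral_mul_le_Lp_mul_Lq _ hpq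
          (hg.mul (by fun_prop)) (by fun_prop)) hp0.le
    _ = (∫⁻ t in Ioc a x, (g * w) t ^ p) * (∫⁻ t in Ioc a x, w' t ^ q) ^ (p - 1) := by
        rw [ENNReal.mul_rpow_of_nonneg _ _ hp0.le, ← ENNReal.rpow_mul, ← ENNReal.rpow_mul,
          one_div_mul_cancel hp0.ne', ENNReal.rpow_one, hqp]
    _ ≤ (∫⁻ t in Ioc a x, (g * w) t ^ p) *
          ENNReal.ofReal (p * (1 - x) ^ (-(1 / p))) ^ (p - 1) := by
        gcongr
    _ = _ := by
        rw [hgw, ENNReal.ofReal_rpow_of_pos (mul_pos hp0 hA), Real.mul_rpow hp0.le hA.le,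
          ← Real.rpow_mul h1x.le, show -(1 / p) * (p - 1) = 1 / p - 1 by field_simp; ring,
          ENNReal.ofReal_mul (Real.rpow_nonneg hp0.le _)]
        ring

lemma lintegral_Ioc_mul_lintegral_Ioc_swap {a b : ℝ} {w H : ℝ → ℝ≥0∞} (hw : Measurable w)
    (hH : AEMeasurable H (volume.restrict (Ioc a b))) :
    ∫⁻ x in Ioc a b, w x * ∫⁻ t in Ioc a x, H t =
      ∫⁻ t in Ioc a b, H t * ∫⁻ x in Ioc t b, w x := by
  set K : ℝ → ℝ → ℝ≥0∞ := fun x t => w x * (Iic x).indicator H t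
  have hx : ∀ x ∈ Ioc a b, w x * ∫⁻ t in Ioc a x, H t = ∫⁻ t in Ioc a b, K x t := by
    intro x hx
    rw [lintegral_const_mul'' _ (hH.indicator measurableSet_Iic), lintegral_indicator
      measurableSet_Iic, Measure.restrict_restrict measurableSet_Iic, inter_comm, Ioc_inter_Iic,
      min_eq_right hx.2]
  have ht : ∀ t ∈ Ioc a b, ∫⁻ x in Ioc a b, K x t = H t * ∫⁻ x in Ioc t b, w x := by
    intro t ht
    have hK : (K · t) = fun x => (Ici t).indicator w x * H t := by
      ext x
      by_cases h : t ≤ x <;> simp [K, indicator_apply, h, mul_comm]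
    rw [hK, lintegral_mul_const _ (hw.indicator measurableSet_Ici), mul_comm,
      lintegral_indicator measurableSet_Ici, Measure.restrict_restrict measurableSet_Ici,
      show Ici t ∩ Ioc a b = Icc t b by ext y; grind,
      Measure.restrict_congr_set Ioc_ae_eq_Icc]
  have hK : AEMeasurable (Function.uncurry K)
      ((volume.restrict (Ioc a b)).prod (volume.restrict (Ioc a b))) := by
    have : Function.uncurry K = fun z => w z.1 * {z : ℝ × ℝ | z.2 ≤ z.1}.indicator (H ·.2) z := by
      ext z; simp [K, Function.uncurry, indicator_apply]
    rw [this]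
    exact (hw.comp measurable_fst).aemeasurable.mul <|
      hH.comp_snd.indicator (measurableSet_le measurable_snd measurable_fst)
  rw [setLIntegral_congr_fun measurableSet_Ioc hx, lintegral_lintegral_swap hK,
    setLIntegral_congr_fun measurableSet_Ioc ht]

theorem lintegral_rpow_lintegral_Ioc_le {p : ℝ} (hp : 1 ≤ p) {a : ℝ} {g : ℝ → ℝ≥0∞}
    (hg : AEMeasurable g (volume.restrict (Ioc a 1))) :
    ∫⁻ x in Ioc a 1, (∫⁻ t in Ioc a x, g t) ^ p ≤
      ENNReal.ofReal (p ^ p) * ∫⁻ t in Ioc a 1, g t ^ p * ENNReal.ofReal ((1 - t) ^ p) := by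
  have hp0 : 0 < p := by linarith
  have hIoo : ∀ᵐ x ∂volume.restrict (Ioc a 1), x ∈ Ioo a 1 := ae_restrict_Ioc_mem_Ioo
  have htail : ∀ t < 1, ∫⁻ x in Ioc t 1, ENNReal.ofReal ((1 - x) ^ (1 / p - 1)) =
      ENNReal.ofReal (p * (1 - t) ^ (1 / p)) := by
    intro t ht
    have hr : -1 < 1 / p - 1 := by linarith [one_div_pos.2 hp0]
    rw [lintegral_Ioc_one_sub_rpow ht.le le_rfl (Or.inl hr), sub_self, sub_add_cancel,
      Real.zero_rpow (by positivity), sub_zero]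
    field_simp
  have hweight : ∀ t < 1, ENNReal.ofReal ((1 - t) ^ (p - 1 / p)) *
      ENNReal.ofReal (p * (1 - t) ^ (1 / p)) = ENNReal.ofReal p * ENNReal.ofReal ((1 - t) ^ p) := by
    intro t ht
    rw [← ENNReal.ofReal_mul (by positivity), ← ENNReal.ofReal_mul hp0.le, mul_left_comm,
      ← Real.rpow_add (by linarith), sub_add_cancel]
  calc ∫⁻ x in Ioc a 1, (∫⁻ t in Ioc a x, g t) ^ p
      ≤ ∫⁻ x in Ioc a 1, ENNReal.ofReal (p ^ (p - 1)) * (ENNReal.ofReal ((1 - x) ^ (1 / p - 1)) *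
          ∫⁻ t in Ioc a x, g t ^ p * ENNReal.ofReal ((1 - t) ^ (p - 1 / p))) := by
        refine lintegral_mono_ae (hIoo.mono fun x hx => rpow_lintegral_Ioc_le hp hx.1.le hx.2 ?_)
        exact hg.mono_measure (Measure.restrict_mono (Ioc_subset_Ioc_right hx.2.le) le_rfl)
    _ = ENNReal.ofReal (p ^ (p - 1)) * ∫⁻ t in Ioc a 1, g t ^ p *
          (ENNReal.ofReal ((1 - t) ^ (p - 1 / p)) * ENNReal.ofReal (p * (1 - t) ^ (1 / p))) := by
        rw [lintegral_const_mul' _ _ ENNReal.ofReal_ne_top,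
          lintegral_Ioc_mul_lintegral_Ioc_swap (by fun_prop)
            (H := fun t => g t ^ p * ENNReal.ofReal ((1 - t) ^ (p - 1 / p))) (by fun_prop)]
        congr 1
        refine lintegral_congr_ae (hIoo.mono fun t ht => ?_)
        simp only [htail t ht.2, mul_assoc]
    _ = ENNReal.ofReal (p ^ p) * ∫⁻ t in Ioc a 1, g t ^ p * ENNReal.ofReal ((1 - t) ^ p) := by
        rw [← lintegral_congr_ae (hIoo.mono fun t ht => by rw [hweight t ht.2, mul_left_comm]),
          lintegral_const_mul' _ _ ENNReal.ofReal_ne_top, ← mul_assoc,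
          ← ENNReal.ofReal_mul (by positivity), ← Real.rpow_add_one hp0.ne', sub_add_cancel]

lemma enorm_sub_le_lintegral_derivWithin {E : Type*} [NormedAddCommGroup E] [NormedSpace ℝ E]
    [CompleteSpace E] {f : ℝ → E} {a b x : ℝ} (hf : ContDiffOn ℝ 1 f (Ico a b))
    (hx : x ∈ Ico a b) :
    ‖f x - f a‖ₑ ≤ ∫⁻ t in Ioc a x, ‖derivWithin f (Ico a b) t‖ₑ := by
  have hsub : Icc a x ⊆ Ico a b := Icc_subset_Ico_right hx.2
  calc ‖f x - f a‖ₑ = ‖∫ t in Ioc a x, deriv f t‖ₑ := by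
        rw [← intervalIntegral.integral_of_le hx.1,
          intervalIntegral.integral_deriv_of_contDiffOn_Icc (hf.mono hsub) hx.1]
    _ ≤ ∫⁻ t in Ioc a x, ‖deriv f t‖ₑ := enorm_integral_le_lintegral_enorm _
    _ = ∫⁻ t in Ioc a x, ‖derivWithin f (Ico a b) t‖ₑ := by
        rw [← restrict_Ioo_eq_restrict_Ioc]
        refine setLIntegral_congr_fun measurableSet_Ioo fun t ht => ?_
        rw [derivWithin_of_mem_nhds (Ico_mem_nhds ht.1 (ht.2.trans_le hx.2.le))]

lemma lintegral_enorm_sub_rpow_le_of_contDiffOn {E : Type*} [NormedAddCommGroup E]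
    [NormedSpace ℝ E] [CompleteSpace E] {f : ℝ → E} {p a : ℝ} (hp : 1 ≤ p)
    (hf : ContDiffOn ℝ 1 f (Ico a 1)) :
    ∫⁻ x in Ioc a 1, ‖f x - f a‖ₑ ^ p ≤
      ENNReal.ofReal (p ^ p) *
        ∫⁻ t in Ioc a 1, ‖derivWithin f (Ico a 1) t‖ₑ ^ p * ENNReal.ofReal ((1 - t) ^ p) := by
  have hf' : ContinuousOn (derivWithin f (Ico a 1)) (Ico a 1) :=
    hf.continuousOn_derivWithin (uniqueDiffOn_Ico a 1) le_rfl
  refine (lintegral_mono_ae (ae_restrict_Ioc_mem_Ioo.mono fun x hx => ENNReal.rpow_le_rpow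
    (enorm_sub_le_lintegral_derivWithin hf ⟨hx.1.le, hx.2⟩) (by linarith))).trans ?_
  exact lintegral_rpow_lintegral_Ioc_le hp
    (aemeasurable_restrict_Ioc_of_continuousOn_Ioo (hf'.mono Ioo_subset_Ico_self).enorm)

theorem stmt0_general (p : ℝ) (hp : 1 ≤ p) (f : ℝ → ℂ)
    (hC1 : ContDiffOn ℝ 1 f (Ico (0:ℝ) 1)) :
    (∫⁻ x in Ioc (0:ℝ) 1, ENNReal.ofReal (‖f x‖ ^ p)) ^ (1/p) ≤
      ENNReal.ofReal p *
        (∫⁻ x in Ioc (0:ℝ) 1,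
            ENNReal.ofReal (‖derivWithin f (Ico (0:ℝ) 1) x‖ ^ p * (1-x) ^ p)) ^ (1/p)
      + ENNReal.ofReal ‖f 0‖ := by
  have hp0 : 0 < p := by linarith
  have hf : AEMeasurable (fun x => ‖f x - f 0‖ₑ) (volume.restrict (Ioc 0 1)) :=
    aemeasurable_restrict_Ioc_of_continuousOn_Ioo
      ((hC1.continuousOn.mono Ioo_subset_Ico_self).sub continuousOn_const).enorm
  have hconst : (∫⁻ _ in Ioc (0:ℝ) 1, ‖f 0‖ₑ ^ p) ^ (1 / p) = ‖f 0‖ₑ := by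
    rw [setLIntegral_const, Real.volume_Ioc, sub_zero, ENNReal.ofReal_one, mul_one,
      ← ENNReal.rpow_mul, mul_one_div_cancel hp0.ne', ENNReal.rpow_one]
  simp only [ENNReal.ofReal_mul (Real.rpow_nonneg (norm_nonneg _) _),
    ← ENNReal.ofReal_rpow_of_nonneg (norm_nonneg _) hp0.le, ofReal_norm]
  calc (∫⁻ x in Ioc 0 1, ‖f x‖ₑ ^ p) ^ (1 / p)
      ≤ (∫⁻ x in Ioc 0 1, (‖f x - f 0‖ₑ + ‖f 0‖ₑ) ^ p) ^ (1 / p) := by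
        gcongr with x
        simpa using enorm_add_le (f x - f 0) (f 0)
    _ ≤ (∫⁻ x in Ioc 0 1, ‖f x - f 0‖ₑ ^ p) ^ (1 / p) + ‖f 0‖ₑ := by
        simpa only [hconst, Pi.add_apply] using
          ENNReal.lintegral_Lp_add_le hf (aemeasurable_const (b := ‖f 0‖ₑ)) hp
    _ ≤ (ENNReal.ofReal (p ^ p) * ∫⁻ t in Ioc 0 1,
          ‖derivWithin f (Ico 0 1) t‖ₑ ^ p * ENNReal.ofReal ((1 - t) ^ p)) ^ (1 / p)
          + ‖f 0‖ₑ := by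
        gcongr
        exact lintegral_enorm_sub_rpow_le_of_contDiffOn hp hC1
    _ = _ := by
        rw [ENNReal.mul_rpow_of_nonneg _ _ (by positivity), ENNReal.ofReal_rpow_of_nonneg
          (by positivity) (by positivity), ← Real.rpow_mul hp0.le, mul_one_div_cancel hp0.ne',
          Real.rpow_one]

/-- Let `1 ≤ p < ∞`. If `f : [0,1) → ℂ` is `C¹` on `[0,1)` and belongs to
`L^p([0,1])`, then `(∫₀¹ |f|^p)^{1/p} ≤ p (∫₀¹ |f'(x)|^p (1-x)^p dx)^{1/p} + |f 0|`. -/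
theorem stmt0 (p : ℝ) (hp : 1 ≤ p) (f : ℝ → ℂ)
    (hC1 : ContDiffOn ℝ 1 f (Ico (0:ℝ) 1))
    (hLp : MemLp f (ENNReal.ofReal p) (volume.restrict (Ioc (0:ℝ) 1))) :
    (∫⁻ x in Ioc (0:ℝ) 1, ENNReal.ofReal (‖f x‖ ^ p)) ^ (1/p) ≤
      ENNReal.ofReal p *
        (∫⁻ x in Ioc (0:ℝ) 1,
            ENNReal.ofReal (‖derivWithin f (Ico (0:ℝ) 1) x‖ ^ p * (1-x) ^ p)) ^ (1/p)
      + ENNReal.ofReal ‖f 0‖ :=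
  stmt0_general p hp f hC1
end

section
/- Let 1 ≤ p < +∞ and 1 ≤ q ≤ +∞. For every analytic function f on the unit disc 𝔻 one has ρ_{p,q}(f) ≤ p·ρ_{p,q}((1-|z|)·f'(z)) + |f(0)|, where ρ_{p,q} is also applied to the (measurable) function z ↦ (1-|z|)f'(z). -/
open MeasureTheory Metric Filter
open scoped ENNReal NNReal

/-- The point `r e^{iθ}` of the complex plane. -/
noncomputable def circ (r θ : ℝ) : ℂ := r * Complex.exp (θ * Complex.I)

/-- The average radial integrability (quasi-)norm `ρ_{p,q}`, for `1 ≤ p < ∞` and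
`1 ≤ q ≤ ∞` (the case `q = ∞` being the essential/pointwise supremum in `θ`),
taking values in `ℝ≥0∞`. -/
noncomputable def rho (p : ℝ) (q : ℝ≥0∞) (h : ℂ → ℂ) : ℝ≥0∞ :=
  if q = ⊤ then
    ⨆ θ : ℝ, (∫⁻ r in Set.Ioc (0:ℝ) 1, ENNReal.ofReal (‖h (circ r θ)‖ ^ p)) ^ (1/p)
  else
    (ENNReal.ofReal (1/(2*Real.pi)) *
      ∫⁻ θ in Set.Ioc (0:ℝ) (2*Real.pi),
        (∫⁻ r in Set.Ioc (0:ℝ) 1, ENNReal.ofReal (‖h (circ r θ)‖ ^ p)) ^ (q.toReal/p)) ^ (1/q.toReal)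

/-!
Along each ray the fundamental theorem of calculus gives
`|f(re^{iθ})| ≤ |f(0)| + ∫₀^r |f'(te^{iθ})| dt`. Minkowski's inequality in `L^p(0,1)` together
with Hardy's inequality `‖∫₀^r H‖_{L^p(0,1)} ≤ p ‖(1-t) H(t)‖_{L^p(0,1)}` yields the estimate for
each fixed `θ`, and Minkowski's inequality in `L^q` of the normalised angular measure integrates
it over `θ`. Hardy's inequality follows from Hölder's inequality against the weight
`(1-t)^{1-1/p²}`, chosen so that the conjugate factor integrates to `p (1-r)^{-1/p}`, and from
Tonelli's theorem over the triangle `0 < t ≤ r < 1`.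
-/

open Set

lemma ENNReal.rpow_mul_rpow_one_div (a b : ℝ≥0∞) {p : ℝ} (hp : 0 < p) :
    (a ^ p * b) ^ (1 / p) = a * b ^ (1 / p) := by
  rw [ENNReal.mul_rpow_of_nonneg _ _ (by positivity), ← ENNReal.rpow_mul,
    mul_one_div_cancel hp.ne', ENNReal.rpow_one]

lemma lintegral_rpow_one_div_le_const_add {α : Type*} [MeasurableSpace α] {μ : Measure α}
    [IsProbabilityMeasure μ] {q : ℝ} (hq : 1 ≤ q) {b g : α → ℝ≥0∞} {c : ℝ≥0∞}
    (hg : AEMeasurable g μ) (hb : ∀ᵐ x ∂μ, b x ≤ c + g x) :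
    (∫⁻ x, b x ^ q ∂μ) ^ (1 / q) ≤ c + (∫⁻ x, g x ^ q ∂μ) ^ (1 / q) := by
  have hq0 : 0 < q := by linarith
  calc (∫⁻ x, b x ^ q ∂μ) ^ (1 / q)
      ≤ (∫⁻ x, ((fun _ => c) x + g x) ^ q ∂μ) ^ (1 / q) := by
        gcongr ?_ ^ _
        exact lintegral_mono_ae (hb.mono fun x hx => by gcongr)
    _ ≤ (∫⁻ _, c ^ q ∂μ) ^ (1 / q) + (∫⁻ x, g x ^ q ∂μ) ^ (1 / q) :=
        ENNReal.lintegral_Lp_add_le aemeasurable_const hg hq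
    _ = c + (∫⁻ x, g x ^ q ∂μ) ^ (1 / q) := by
        rw [lintegral_const, measure_univ, mul_one, ← ENNReal.rpow_mul,
          mul_one_div_cancel hq0.ne', ENNReal.rpow_one]

lemma lintegral_Ioo_mul_lintegral_Ioc_eq {a b : ℝ} {φ ψ : ℝ → ℝ≥0∞}
    (hφ : Measurable φ) (hψ : Measurable ψ) :
    ∫⁻ r in Ioo a b, ψ r * ∫⁻ t in Ioc a r, φ t
      = ∫⁻ t in Ioo a b, φ t * ∫⁻ r in Ico t b, ψ r := by
  have iterate : ∀ (g h : ℝ → ℝ≥0∞) (U : ℝ → Set ℝ), Measurable h →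
      (∀ x, MeasurableSet (U x)) →
      ∫⁻ x in Ioo a b, g x * ∫⁻ y in U x, h y
        = ∫⁻ x, ∫⁻ y, (Ioo a b).indicator g x * (U x).indicator h y := by
    intro g h U hh hU
    rw [← lintegral_indicator measurableSet_Ioo]
    congr 1 with x
    rw [indicator_mul_left, ← lintegral_indicator (hU x),
      ← lintegral_const_mul _ (hh.indicator (hU x))]
  set T : Set (ℝ × ℝ) := {x | a < x.2 ∧ x.2 ≤ x.1 ∧ x.1 < b}
  have hT : MeasurableSet T :=
    (measurableSet_lt measurable_const measurable_snd).inter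
      ((measurableSet_le measurable_snd measurable_fst).inter
        (measurableSet_lt measurable_fst measurable_const))
  set F : ℝ × ℝ → ℝ≥0∞ := T.indicator fun x => ψ x.1 * φ x.2
  have hF : Measurable F :=
    ((hψ.comp measurable_fst).mul (hφ.comp measurable_snd)).indicator hT
  have hleft : ∀ r t, (Ioo a b).indicator ψ r * (Ioc a r).indicator φ t = F (r, t) := by
    intro r t
    simp only [F, T, indicator_apply, mem_Ioo, mem_Ioc, mem_ofPred_eq]
    split_ifs <;> first | rfl | (exfalso; grind) | simp
  have hright : ∀ r t, (Ioo a b).indicator φ t * (Ico t b).indicator ψ r = F (r, t) := by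
    intro r t
    simp only [F, T, indicator_apply, mem_Ioo, mem_Ico, mem_ofPred_eq]
    split_ifs <;> first | exact mul_comm _ _ | (exfalso; grind) | simp
  rw [iterate ψ φ _ hφ fun _ => measurableSet_Ioc, iterate φ ψ _ hψ fun _ => measurableSet_Ico]
  simp only [hleft, hright]
  exact lintegral_lintegral_swap hF.aemeasurable

lemma lintegral_Ioc_one_sub_rpow_neg_le {s r : ℝ} (hs : 0 < s) (hr : r < 1) :
    ∫⁻ t in Ioc 0 r, ENNReal.ofReal (1 - t) ^ (-(1 + s))
      ≤ ENNReal.ofReal (1 / s) * ENNReal.ofReal (1 - r) ^ (-s) := by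
  rcases le_or_gt r 0 with hr0 | hr0
  · simp [Ioc_eq_empty_of_le hr0]
  have hpos : ∀ t ∈ Icc 0 r, 0 < 1 - t := fun t ht => by linarith [ht.2]
  have hcont : ContinuousOn (fun t : ℝ => (1 - t) ^ (-(1 + s))) (Icc 0 r) :=
    ContinuousOn.rpow_const (by fun_prop) fun t ht => Or.inl (hpos t ht).ne'
  rw [setLIntegral_congr_fun measurableSet_Ioc fun t ht =>
      ENNReal.ofReal_rpow_of_pos (hpos t (Ioc_subset_Icc_self ht)),
    ← ofReal_integral_eq_lintegral_ofReal (hcont.integrableOn_Icc.mono_set Ioc_subset_Icc_self)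
      (ae_restrict_of_forall_mem measurableSet_Ioc fun t ht =>
        (Real.rpow_pos_of_pos (hpos t (Ioc_subset_Icc_self ht)) _).le),
    ← intervalIntegral.integral_of_le hr0.le,
    intervalIntegral.integral_comp_sub_left (fun x : ℝ => x ^ (-(1 + s))),
    integral_rpow (Or.inr ⟨by linarith, fun h => by
      rw [uIcc_of_le (by linarith)] at h; linarith [h.1]⟩),
    ENNReal.ofReal_rpow_of_pos (by linarith), ← ENNReal.ofReal_mul (by positivity)]
  apply ENNReal.ofReal_le_ofReal
  rw [show -(1 + s) + 1 = -s by ring, sub_zero, Real.one_rpow, div_neg, ← neg_div, neg_sub,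
    one_div_mul_eq_div]
  gcongr
  linarith

lemma lintegral_Ico_one_sub_rpow {s t : ℝ} (hs : 0 < s) (ht : t ≤ 1) :
    ∫⁻ r in Ico t 1, ENNReal.ofReal (1 - r) ^ (s - 1)
      = ENNReal.ofReal (1 / s) * ENNReal.ofReal (1 - t) ^ s := by
  have hpos : ∀ r ∈ Ioo t 1, 0 < 1 - r := fun r hr => by linarith [hr.2]
  have hint : IntervalIntegrable (fun r : ℝ => (1 - r) ^ (s - 1)) volume t 1 := by
    simpa using ((intervalIntegral.intervalIntegrable_rpow' (a := 0) (b := 1 - t)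
      (r := s - 1) (by linarith)).comp_sub_left 1).symm
  rw [← restrict_Ioo_eq_restrict_Ico,
    setLIntegral_congr_fun measurableSet_Ioo fun r hr => ENNReal.ofReal_rpow_of_pos (hpos r hr),
    restrict_Ioo_eq_restrict_Ioc,
    ← ofReal_integral_eq_lintegral_ofReal
      ((intervalIntegrable_iff_integrableOn_Ioc_of_le ht).1 hint)
      (ae_restrict_of_forall_mem measurableSet_Ioc fun r hr =>
        Real.rpow_nonneg (by linarith [hr.2]) _),
    ← intervalIntegral.integral_of_le ht,
    intervalIntegral.integral_comp_sub_left (fun x : ℝ => x ^ (s - 1)),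
    integral_rpow (Or.inl (by linarith)), ENNReal.ofReal_rpow_of_nonneg (by linarith) hs.le,
    ← ENNReal.ofReal_mul (by positivity)]
  rw [sub_self, sub_add_cancel, Real.zero_rpow hs.ne', sub_zero, one_div_mul_eq_div]

lemma rpow_lintegral_Ioc_le_weighted {p r : ℝ} (hp : 1 ≤ p) (hr : r < 1) {H : ℝ → ℝ≥0∞}
    (hH : Measurable H) :
    (∫⁻ t in Ioc 0 r, H t) ^ p
      ≤ ENNReal.ofReal p ^ (p - 1) * ENNReal.ofReal (1 - r) ^ (1 / p - 1)
        * ∫⁻ t in Ioc 0 r, ENNReal.ofReal (1 - t) ^ (p - 1 / p) * H t ^ p := by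
  rcases hp.eq_or_lt with rfl | hp
  · simp
  have hp0 : 0 < p := by linarith
  set q := p.conjExponent
  have hpq : p.HolderConjugate q := .conjExponent hp
  set w : ℝ → ℝ≥0∞ := fun t => ENNReal.ofReal (1 - t)
  set a : ℝ := 1 - 1 / p ^ 2
  have hsplit : ∫⁻ t in Ioc 0 r, H t = ∫⁻ t in Ioc 0 r, (w t ^ a * H t) * w t ^ (-a) := by
    refine setLIntegral_congr_fun measurableSet_Ioc fun t ht => ?_
    have hwt : w t ≠ 0 := by
      simp only [w, ne_eq, ENNReal.ofReal_eq_zero, not_le]; linarith [ht.2]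
    rw [mul_right_comm, ← ENNReal.rpow_add _ _ hwt ENNReal.ofReal_ne_top, add_neg_cancel,
      ENNReal.rpow_zero, one_mul]
  have hweight : ∫⁻ t in Ioc 0 r, (w t ^ (-a)) ^ q ≤ ENNReal.ofReal p * w r ^ (-(1 / p)) := by
    have e : -a * q = -(1 + 1 / p) := by
      simp only [a, q, Real.conjExponent]; field_simp [(by linarith : p - 1 ≠ 0)]; ring
    simp_rw [← ENNReal.rpow_mul, e]
    simpa using lintegral_Ioc_one_sub_rpow_neg_le (s := 1 / p) (by positivity) hr
  calc (∫⁻ t in Ioc 0 r, H t) ^ p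
      ≤ ((∫⁻ t in Ioc 0 r, (w t ^ a * H t) ^ p) ^ (1 / p)
          * (∫⁻ t in Ioc 0 r, (w t ^ (-a)) ^ q) ^ (1 / q)) ^ p := by
        rw [hsplit]
        gcongr
        exact ENNReal.lintegral_mul_le_Lp_mul_Lq _ hpq (by fun_prop) (by fun_prop)
    _ ≤ ((∫⁻ t in Ioc 0 r, (w t ^ a * H t) ^ p) ^ (1 / p)
          * (ENNReal.ofReal p * w r ^ (-(1 / p))) ^ (1 / q)) ^ p := by
        gcongr
        exact (one_div_pos.2 hpq.symm.pos).le
    _ = ENNReal.ofReal p ^ (p - 1) * w r ^ (1 / p - 1)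
          * ∫⁻ t in Ioc 0 r, w t ^ (p - 1 / p) * H t ^ p := by
        have e1 : 1 / q * p = p - 1 := by simp only [q, Real.conjExponent]; field_simp
        have e2 : -(1 / p) * (p - 1) = 1 / p - 1 := by field_simp; ring
        have e3 : a * p = p - 1 / p := by simp only [a]; field_simp
        simp_rw [ENNReal.mul_rpow_of_nonneg _ _ hp0.le, ← ENNReal.rpow_mul]
        rw [e1, e3, one_div_mul_cancel hp0.ne', ENNReal.rpow_one,
          ENNReal.mul_rpow_of_nonneg _ _ (by linarith : 0 ≤ p - 1), ← ENNReal.rpow_mul, e2]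
        ring

theorem lintegral_Ioo_rpow_lintegral_Ioc_le {p : ℝ} (hp : 1 ≤ p) {H : ℝ → ℝ≥0∞}
    (hH : Measurable H) :
    ∫⁻ r in Ioo 0 1, (∫⁻ t in Ioc 0 r, H t) ^ p
      ≤ ENNReal.ofReal p ^ p * ∫⁻ t in Ioo 0 1, (ENNReal.ofReal (1 - t) * H t) ^ p := by
  have hp0 : 0 < p := by linarith
  set w : ℝ → ℝ≥0∞ := fun t => ENNReal.ofReal (1 - t)
  set P := ENNReal.ofReal p
  have hPtop : P ^ (p - 1) ≠ ⊤ :=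
    ENNReal.rpow_ne_top_of_nonneg (by linarith) ENNReal.ofReal_ne_top
  have hinner : ∀ t ∈ Ioo (0 : ℝ) 1,
      w t ^ (p - 1 / p) * H t ^ p * ∫⁻ r in Ico t 1, w r ^ (1 / p - 1) = P * (w t * H t) ^ p := by
    intro t ht
    have hwt : w t ≠ 0 := by
      simp only [w, ne_eq, ENNReal.ofReal_eq_zero, not_le]; linarith [ht.2]
    rw [lintegral_Ico_one_sub_rpow (by positivity) ht.2.le, one_div_one_div,
      ENNReal.mul_rpow_of_nonneg _ _ hp0.le]
    calc w t ^ (p - 1 / p) * H t ^ p * (P * w t ^ (1 / p))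
        = P * ((w t ^ (p - 1 / p) * w t ^ (1 / p)) * H t ^ p) := by ring
      _ = P * (w t ^ p * H t ^ p) := by
        rw [← ENNReal.rpow_add _ _ hwt ENNReal.ofReal_ne_top, sub_add_cancel]
  calc ∫⁻ r in Ioo 0 1, (∫⁻ t in Ioc 0 r, H t) ^ p
      ≤ ∫⁻ r in Ioo 0 1,
          P ^ (p - 1) * (w r ^ (1 / p - 1) * ∫⁻ t in Ioc 0 r, w t ^ (p - 1 / p) * H t ^ p) :=
        setLIntegral_mono' measurableSet_Ioo fun r hr =>
          (rpow_lintegral_Ioc_le_weighted hp hr.2 hH).trans_eq (mul_assoc _ _ _)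
    _ = P ^ (p - 1) * ∫⁻ t in Ioo 0 1,
          w t ^ (p - 1 / p) * H t ^ p * ∫⁻ r in Ico t 1, w r ^ (1 / p - 1) := by
        rw [lintegral_const_mul' _ _ hPtop, lintegral_Ioo_mul_lintegral_Ioc_eq (by fun_prop)
          (by fun_prop)]
    _ = P ^ p * ∫⁻ t in Ioo 0 1, (w t * H t) ^ p := by
        rw [setLIntegral_congr_fun measurableSet_Ioo hinner, lintegral_const_mul' _ _
          ENNReal.ofReal_ne_top, ← mul_assoc]
        congr 1
        conv_rhs => rw [← sub_add_cancel p 1, ENNReal.rpow_add _ _ (by simpa [P] using hp0)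
          ENNReal.ofReal_ne_top, ENNReal.rpow_one]

lemma norm_circ {r : ℝ} (hr : 0 ≤ r) (θ : ℝ) : ‖circ r θ‖ = r := by
  rw [circ, norm_mul, Complex.norm_exp_ofReal_mul_I, Complex.norm_real, mul_one,
    Real.norm_of_nonneg hr]

lemma hasDerivAt_circ (r θ : ℝ) : HasDerivAt (circ · θ) (Complex.exp (θ * Complex.I)) r := by
  unfold circ
  simpa using (hasDerivAt_id (r : ℂ)).comp_ofReal.mul_const (Complex.exp (θ * Complex.I))

lemma contDiff_circ (θ : ℝ) : ContDiff ℝ 1 (circ · θ) :=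
  Complex.ofRealCLM.contDiff.mul contDiff_const

lemma enorm_le_enorm_zero_add_lintegral_deriv_circ {f : ℂ → ℂ}
    (hf : DifferentiableOn ℂ f (ball 0 1)) (θ : ℝ) {r : ℝ} (hr0 : 0 ≤ r) (hr : r < 1) :
    ‖f (circ r θ)‖ₑ ≤ ‖f 0‖ₑ + ∫⁻ t in Ioc 0 r, ‖deriv f (circ t θ)‖ₑ := by
  have hball : ∀ t ∈ Icc 0 r, circ t θ ∈ ball (0 : ℂ) 1 := fun t ht => by
    rw [mem_ball_zero_iff, norm_circ ht.1]; linarith [ht.2]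
  have hderiv : ∀ t ∈ Icc 0 r,
      HasDerivAt (fun s => f (circ s θ)) (deriv f (circ t θ) * Complex.exp (θ * Complex.I)) t :=
    fun t ht => (hf.differentiableAt (isOpen_ball.mem_nhds (hball t ht))).hasDerivAt.comp t
      (hasDerivAt_circ t θ)
  have hC1 : ContDiffOn ℝ 1 (fun s => f (circ s θ)) (Icc 0 r) :=
    ((hf.contDiffOn isOpen_ball).restrict_scalars ℝ).comp (contDiff_circ θ).contDiffOn hball
  calc ‖f (circ r θ)‖ₑ ≤ ‖f 0‖ₑ + ‖f (circ r θ) - f (circ 0 θ)‖ₑ := by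
        simpa [circ] using enorm_add_le (f 0) (f (circ r θ) - f 0)
    _ ≤ ‖f 0‖ₑ + ∫⁻ t in Icc 0 r, ‖deriv (fun s => f (circ s θ)) t‖ₑ := by
        gcongr
        exact enorm_sub_le_lintegral_deriv_of_contDiffOn_Icc hC1 hr0
    _ = ‖f 0‖ₑ + ∫⁻ t in Ioc 0 r, ‖deriv f (circ t θ)‖ₑ := by
        rw [← restrict_Ioc_eq_restrict_Icc]
        congr 1
        refine setLIntegral_congr_fun measurableSet_Ioc fun t ht => ?_
        rw [(hderiv t (Ioc_subset_Icc_self ht)).deriv, enorm_mul, Complex.enorm_exp_ofReal_mul_I,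
          mul_one]

noncomputable def radialNorm (p : ℝ) (h : ℂ → ℂ) (θ : ℝ) : ℝ≥0∞ :=
  (∫⁻ r in Ioc 0 1, ‖h (circ r θ)‖ₑ ^ p) ^ (1 / p)

lemma measurable_radialNorm {h : ℂ → ℂ} (hh : Measurable h) (p : ℝ) :
    Measurable (radialNorm p h) := by
  have hcirc : Measurable fun x : ℝ × ℝ => circ x.2 x.1 := by unfold circ; fun_prop
  exact (((hh.comp hcirc).enorm.pow_const p).lintegral_prod_right').pow_const _

instance : IsProbabilityMeasure (volume.restrict (Ioo (0 : ℝ) 1)) :=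
  ⟨by simp⟩

theorem radialNorm_le {p : ℝ} (hp : 1 ≤ p) {f : ℂ → ℂ} (hf : DifferentiableOn ℂ f (ball 0 1))
    (θ : ℝ) :
    radialNorm p f θ
      ≤ ‖f 0‖ₑ
        + ENNReal.ofReal p * radialNorm p (fun z => ((1 - ‖z‖ : ℝ) : ℂ) * deriv f z) θ := by
  have hp0 : 0 < p := by linarith
  set H : ℝ → ℝ≥0∞ := fun t => ‖deriv f (circ t θ)‖ₑ
  have hH : Measurable H := by unfold H circ; fun_prop
  set G : ℝ → ℝ≥0∞ := fun r => ∫⁻ t in Ioc 0 r, H t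
  have hG : Monotone G := fun r₁ r₂ h => lintegral_mono_set (Ioc_subset_Ioc_right h)
  have hweighted : ∫⁻ t in Ioo 0 1, (ENNReal.ofReal (1 - t) * H t) ^ p
      = ∫⁻ t in Ioc 0 1, ‖((1 - ‖circ t θ‖ : ℝ) : ℂ) * deriv f (circ t θ)‖ₑ ^ p := by
    rw [restrict_Ioo_eq_restrict_Ioc]
    refine setLIntegral_congr_fun measurableSet_Ioc fun t ht => ?_
    rw [enorm_mul, norm_circ ht.1.le, ← ofReal_norm (((1 - t : ℝ)) : ℂ), Complex.norm_real,
      Real.norm_of_nonneg (by linarith [ht.2])]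
  calc radialNorm p f θ = (∫⁻ r in Ioo 0 1, ‖f (circ r θ)‖ₑ ^ p) ^ (1 / p) := by
        rw [radialNorm, restrict_Ioo_eq_restrict_Ioc]
    _ ≤ ‖f 0‖ₑ + (∫⁻ r in Ioo 0 1, G r ^ p) ^ (1 / p) :=
        lintegral_rpow_one_div_le_const_add hp hG.measurable.aemeasurable
          (ae_restrict_of_forall_mem measurableSet_Ioo fun r hr =>
            enorm_le_enorm_zero_add_lintegral_deriv_circ hf θ hr.1.le hr.2)
    _ ≤ ‖f 0‖ₑ + (ENNReal.ofReal p ^ p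
          * ∫⁻ t in Ioo 0 1, (ENNReal.ofReal (1 - t) * H t) ^ p) ^ (1 / p) := by
        gcongr
        exact lintegral_Ioo_rpow_lintegral_Ioc_le hp hH
    _ = _ := by
        rw [ENNReal.rpow_mul_rpow_one_div _ _ hp0, hweighted, radialNorm]

noncomputable def angleMeasure : Measure ℝ :=
  ENNReal.ofReal (1 / (2 * Real.pi)) • volume.restrict (Ioc 0 (2 * Real.pi))

instance : IsProbabilityMeasure angleMeasure := by
  constructor
  rw [angleMeasure, Measure.smul_apply, Measure.restrict_apply_univ, Real.volume_Ioc, sub_zero,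
    smul_eq_mul, ← ENNReal.ofReal_mul (by positivity), one_div_mul_cancel (by positivity),
    ENNReal.ofReal_one]

lemma lintegral_ofReal_norm_rpow {p : ℝ} (hp : 0 ≤ p) (h : ℂ → ℂ) (θ : ℝ) :
    ∫⁻ r in Ioc (0 : ℝ) 1, ENNReal.ofReal (‖h (circ r θ)‖ ^ p)
      = ∫⁻ r in Ioc 0 1, ‖h (circ r θ)‖ₑ ^ p := by
  simp_rw [← ENNReal.ofReal_rpow_of_nonneg (norm_nonneg _) hp, ofReal_norm]

lemma rho_top {p : ℝ} (hp : 0 ≤ p) (h : ℂ → ℂ) : rho p ⊤ h = ⨆ θ, radialNorm p h θ := by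
  simp only [rho, if_pos, lintegral_ofReal_norm_rpow hp, radialNorm]

lemma rho_of_ne_top {p : ℝ} (hp : 0 < p) {q : ℝ≥0∞} (hq : q ≠ ⊤) (h : ℂ → ℂ) :
    rho p q h = (∫⁻ θ, radialNorm p h θ ^ q.toReal ∂angleMeasure) ^ (1 / q.toReal) := by
  simp only [rho, if_neg hq, lintegral_ofReal_norm_rpow hp.le, angleMeasure,
    lintegral_smul_measure, radialNorm, ← ENNReal.rpow_mul, smul_eq_mul, one_div_mul_eq_div]

/-- Littlewood–Paley type inequality. For `1 ≤ p < ∞`, `1 ≤ q ≤ ∞` and any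
analytic `f` on the unit disc, `ρ_{p,q}(f) ≤ p ρ_{p,q}((1-|z|) f'(z)) + |f(0)|`. -/
theorem stmt1 (p : ℝ) (q : ℝ≥0∞) (hp : 1 ≤ p) (hq : 1 ≤ q)
    (f : ℂ → ℂ) (hf : DifferentiableOn ℂ f (ball (0:ℂ) 1)) :
    rho p q f ≤
      ENNReal.ofReal p * rho p q (fun z => ((1 - ‖z‖ : ℝ) : ℂ) * deriv f z)
        + ENNReal.ofReal ‖f 0‖ := by
  have hp0 : 0 < p := by linarith
  set g : ℂ → ℂ := fun z => ((1 - ‖z‖ : ℝ) : ℂ) * deriv f z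
  have hg : Measurable g := by unfold g; fun_prop
  have hradial := radialNorm_le hp hf
  rw [ofReal_norm, add_comm]
  by_cases hq_top : q = ⊤
  · subst hq_top
    simp only [rho_top hp0.le]
    exact iSup_le fun θ => (hradial θ).trans (by gcongr; exact le_iSup (radialNorm p g) θ)
  have hq' : 1 ≤ q.toReal := by
    simpa using ENNReal.toReal_mono hq_top hq
  have hq0 : 0 < q.toReal := by linarith
  rw [rho_of_ne_top hp0 hq_top, rho_of_ne_top hp0 hq_top]
  calc (∫⁻ θ, radialNorm p f θ ^ q.toReal ∂angleMeasure) ^ (1 / q.toReal)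
      ≤ ‖f 0‖ₑ + (∫⁻ θ, (ENNReal.ofReal p * radialNorm p g θ) ^ q.toReal ∂angleMeasure)
          ^ (1 / q.toReal) :=
        lintegral_rpow_one_div_le_const_add hq'
          (((measurable_radialNorm hg p).const_mul _).aemeasurable) (ae_of_all _ hradial)
    _ = ‖f 0‖ₑ + ENNReal.ofReal p
          * (∫⁻ θ, radialNorm p g θ ^ q.toReal ∂angleMeasure) ^ (1 / q.toReal) := by
        simp_rw [ENNReal.mul_rpow_of_nonneg _ _ hq0.le]
        rw [lintegral_const_mul' _ _ (by simp), ENNReal.rpow_mul_rpow_one_div _ _ hq0]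
end

section
/- Let 1 ≤ p < +∞ and let f be analytic on the unit disc 𝔻. Then for all ρ ∈ [0,1) and all θ ∈ [0,2π], (∫_ρ¹ |f(re^{iθ})|^p dr)^{1/p} ≤ p·(∫_ρ¹ |f'(re^{iθ})|^p (1-r)^p dr)^{1/p} + (1-ρ)^{1/p}·|f(ρe^{iθ})|. -/
/-!
Along the ray `r ↦ re^{iθ}`, the fundamental theorem of calculus gives
`|f(re^{iθ})| ≤ |f(ρe^{iθ})| + F r` with `F r = ∫_ρ^r |f'(se^{iθ})| ds`, so by Minkowski's
inequality it suffices to prove the Hardy-type inequality `∫_ρ¹ F^p ≤ p^p ∫_ρ¹ (|f'| (1 - r))^p`.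
On `[ρ, R]`, integrating `((1 - r) F^p)' = -F^p + p F^{p-1} |f'| (1 - r)` and dropping the
nonnegative boundary term gives `∫ F^p ≤ p ∫ F^{p-1} |f'| (1 - r)`, which Hölder's inequality
with exponents `(p-1)/p` and `1/p` bounds by `p (∫ F^p)^{(p-1)/p} (∫ (|f'| (1 - r))^p)^{1/p}`.
Since the truncated integral is finite we may divide, and monotone convergence lets `R → 1`.
-/

open MeasureTheory Metric Set
open scoped ENNReal

open intervalIntegral

theorem ENNReal.le_rpow_mul_of_le_mul_rpow_mul_rpow {I c H : ℝ≥0∞} {p : ℝ} (hp : 0 < p)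
    (hI : I ≠ ⊤) (h : I ≤ c * (I ^ ((p - 1) / p) * H ^ (1 / p))) : I ≤ c ^ p * H := by
  rcases eq_or_ne I 0 with rfl | hI0
  · exact zero_le
  have hJ0 : I ^ ((p - 1) / p) ≠ 0 := by simp [ENNReal.rpow_eq_zero_iff, hI0, hI]
  have hJtop : I ^ ((p - 1) / p) ≠ ⊤ := by simp [ENNReal.rpow_eq_top_iff, hI0, hI]
  have hsplit : I ^ (1 / p) * I ^ ((p - 1) / p) = I := by
    rw [← ENNReal.rpow_add _ _ hI0 hI, ← add_div, add_sub_cancel, div_self hp.ne',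
      ENNReal.rpow_one]
  have hroot : I ^ (1 / p) ≤ c * H ^ (1 / p) := by
    rw [← ENNReal.mul_le_mul_iff_left hJ0 hJtop, hsplit]
    calc I ≤ c * (I ^ ((p - 1) / p) * H ^ (1 / p)) := h
      _ = c * H ^ (1 / p) * I ^ ((p - 1) / p) := by ring
  calc I = (I ^ (1 / p)) ^ p := by
        rw [← ENNReal.rpow_mul, one_div_mul_cancel hp.ne', ENNReal.rpow_one]
    _ ≤ (c * H ^ (1 / p)) ^ p := ENNReal.rpow_le_rpow hroot hp.le
    _ = c ^ p * H := by
      rw [ENNReal.mul_rpow_of_nonneg _ _ hp.le, ← ENNReal.rpow_mul, one_div_mul_cancel hp.ne',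
        ENNReal.rpow_one]

theorem setLIntegral_Ioo_le_of_forall_Ioc_le {f : ℝ → ℝ≥0∞} {a b : ℝ} {C : ℝ≥0∞}
    (h : ∀ R < b, ∫⁻ x in Ioc a R, f x ≤ C) : ∫⁻ x in Ioo a b, f x ≤ C := by
  set u : ℕ → ℝ := fun n => b - 1 / (n + 1)
  have hu : Monotone u := fun m n hmn => by
    simp only [u, sub_le_sub_iff_left]
    gcongr
  have hlub : IsLUB (range u) b := isLUB_of_tendsto_atTop hu <| by
    simpa [u] using tendsto_const_nhds.sub (tendsto_one_div_add_atTop_nhds_zero_nat (𝕜 := ℝ))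
  have hdir : Monotone fun n => Ioo a (u n) := fun m n hmn => Ioo_subset_Ioo_right (hu hmn)
  rw [← iUnion_Ioo_of_mono_of_isGLB_of_isLUB (antitone_const : Antitone fun _ : ℕ => a) hu
      (by simp) hlub,
    setLIntegral_iUnion_of_directed _ hdir.directed_le]
  exact iSup_le fun n => (setLIntegral_congr Ioo_ae_eq_Ioc).trans_le (h _ (by simp [u]; positivity))

section Hardy

variable {g : ℝ → ℝ} {a b p : ℝ}

theorem hasDerivAt_primitive_of_continuousOn (hg : ContinuousOn g (Ico a b)) {r : ℝ}
    (hr : r ∈ Ioo a b) : HasDerivAt (fun x => ∫ s in a..x, g s) (g r) r :=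
  integral_hasDerivAt_right
    ((hg.mono (Icc_subset_Ico_right hr.2)).intervalIntegrable_of_Icc hr.1.le)
    ((hg.mono Ioo_subset_Ico_self).stronglyMeasurableAtFilter isOpen_Ioo r hr)
    (hg.continuousAt (Ico_mem_nhds hr.1 hr.2))

theorem continuousOn_primitive_Icc (hg : ContinuousOn g (Ico a b)) {R : ℝ} (haR : a ≤ R)
    (hRb : R < b) : ContinuousOn (fun r => ∫ s in a..r, g s) (Icc a R) := by
  simpa [uIcc_of_le haR] using continuousOn_primitive_interval (μ := volume)
    ((hg.mono (Icc_subset_Ico_right hRb)).integrableOn_Icc.mono_set (uIcc_of_le haR).subset)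

theorem integral_primitive_rpow_le (hp : 1 ≤ p) (hg : ContinuousOn g (Ico a b))
    (hg0 : ∀ r ∈ Ico a b, 0 ≤ g r) {R : ℝ} (haR : a ≤ R) (hRb : R < b) :
    ∫ r in a..R, (∫ s in a..r, g s) ^ p ≤
      p * ∫ r in a..R, (∫ s in a..r, g s) ^ (p - 1) * (g r * (b - r)) := by
  set F : ℝ → ℝ := fun r => ∫ s in a..r, g s
  have hsub : Icc a R ⊆ Ico a b := Icc_subset_Ico_right hRb
  have hF0 : ∀ r ∈ Icc a R, 0 ≤ F r := fun r hr =>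
    integral_nonneg hr.1 fun s hs => hg0 s (hsub ⟨hs.1, hs.2.trans hr.2⟩)
  have hFc : ContinuousOn F (Icc a R) := continuousOn_primitive_Icc hg haR hRb
  have hFp : ContinuousOn (fun r => F r ^ p) (Icc a R) :=
    hFc.rpow_const fun _ _ => Or.inr (by linarith)
  have hdF : ContinuousOn (fun r => F r ^ (p - 1) * (g r * (b - r))) (Icc a R) :=
    (hFc.rpow_const fun _ _ => Or.inr (by linarith)).mul ((hg.mono hsub).mul (by fun_prop))
  have hint₁ : IntervalIntegrable (fun r => -F r ^ p) volume a R :=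
    hFp.neg.intervalIntegrable_of_Icc haR
  have hint₂ : IntervalIntegrable (fun r => p * (F r ^ (p - 1) * (g r * (b - r)))) volume a R :=
    (continuousOn_const.mul hdF).intervalIntegrable_of_Icc haR
  have hFTC := integral_eq_sub_of_hasDerivAt_of_le haR
    (f := fun r => (b - r) * F r ^ p)
    (f' := fun r => -F r ^ p + p * (F r ^ (p - 1) * (g r * (b - r))))
    ((continuousOn_const.sub continuousOn_id).mul hFp)
    (fun r hr => by
      have hFr := hasDerivAt_primitive_of_continuousOn hg ⟨hr.1, hr.2.trans hRb⟩
      exact (((hasDerivAt_id r).const_sub b).mul (hFr.rpow_const (Or.inr hp))).congr_deriv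
        (by simp only [id]; ring))
    (hint₁.add hint₂)
  have hend : 0 ≤ (b - R) * F R ^ p :=
    mul_nonneg (by linarith) (Real.rpow_nonneg (hF0 R ⟨haR, le_rfl⟩) p)
  rw [integral_add hint₁ hint₂, intervalIntegral.integral_neg,
    intervalIntegral.integral_const_mul] at hFTC
  simp only [F, integral_same, Real.zero_rpow (by linarith : p ≠ 0), mul_zero, sub_zero] at hFTC
  linarith

theorem setLIntegral_Ioc_primitive_rpow_le (hp : 1 ≤ p) (hg : ContinuousOn g (Ico a b))
    (hg0 : ∀ r ∈ Ico a b, 0 ≤ g r) {R : ℝ} (haR : a ≤ R) (hRb : R < b) :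
    ∫⁻ r in Ioc a R, ENNReal.ofReal (∫ s in a..r, g s) ^ p ≤
      ENNReal.ofReal p ^ p * ∫⁻ r in Ioc a R, ENNReal.ofReal (g r * (b - r)) ^ p := by
  set F : ℝ → ℝ := fun r => ∫ s in a..r, g s
  have hpos : 0 < p := by linarith
  have hF0 : ∀ r ∈ Ioc a R, 0 ≤ F r := fun r hr =>
    integral_nonneg hr.1.le fun s hs => hg0 s ⟨hs.1, hs.2.trans_lt (hr.2.trans_lt hRb)⟩
  have hw0 : ∀ r ∈ Ioc a R, 0 ≤ g r * (b - r) := fun r hr =>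
    mul_nonneg (hg0 r ⟨hr.1.le, hr.2.trans_lt hRb⟩) (by linarith [hr.2])
  have hFc : ContinuousOn F (Icc a R) := continuousOn_primitive_Icc hg haR hRb
  have hgc : ContinuousOn g (Icc a R) := hg.mono (Icc_subset_Ico_right hRb)
  have hint : IntegrableOn (fun r => F r ^ (p - 1) * (g r * (b - r))) (Icc a R) :=
    ((hFc.rpow_const fun _ _ => Or.inr (by linarith)).mul (hgc.mul (by fun_prop))).integrableOn_Icc
  have hFm : AEMeasurable (fun r => ENNReal.ofReal (F r)) (volume.restrict (Ioc a R)) :=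
    ((hFc.mono Ioc_subset_Icc_self).aemeasurable measurableSet_Ioc).ennreal_ofReal
  have hwm : AEMeasurable (fun r => ENNReal.ofReal (g r * (b - r))) (volume.restrict (Ioc a R)) :=
    (((hgc.mono Ioc_subset_Icc_self).mul (by fun_prop)).aemeasurable
      measurableSet_Ioc).ennreal_ofReal
  have hI : ∫⁻ r in Ioc a R, ENNReal.ofReal (F r) ^ p = ENNReal.ofReal (∫ r in a..R, F r ^ p) := by
    rw [integral_of_le haR, ofReal_integral_eq_lintegral_ofReal
      ((hFc.rpow_const fun _ _ => Or.inr hpos.le).integrableOn_Icc.mono_set Ioc_subset_Icc_self)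
      (ae_restrict_of_forall_mem measurableSet_Ioc fun r hr => Real.rpow_nonneg (hF0 r hr) p)]
    exact setLIntegral_congr_fun measurableSet_Ioc fun r hr =>
      ENNReal.ofReal_rpow_of_nonneg (hF0 r hr) hpos.le
  have hJ : ENNReal.ofReal (∫ r in a..R, F r ^ (p - 1) * (g r * (b - r))) =
      ∫⁻ r in Ioc a R, (ENNReal.ofReal (F r) ^ p) ^ ((p - 1) / p) *
        (ENNReal.ofReal (g r * (b - r)) ^ p) ^ (1 / p) := by
    rw [integral_of_le haR, ofReal_integral_eq_lintegral_ofReal (hint.mono_set Ioc_subset_Icc_self)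
      (ae_restrict_of_forall_mem measurableSet_Ioc fun r hr =>
        mul_nonneg (Real.rpow_nonneg (hF0 r hr) _) (hw0 r hr))]
    refine setLIntegral_congr_fun measurableSet_Ioc fun r hr => ?_
    rw [← ENNReal.rpow_mul, ← ENNReal.rpow_mul, mul_div_cancel₀ _ hpos.ne',
      mul_one_div_cancel hpos.ne', ENNReal.rpow_one,
      ENNReal.ofReal_mul (Real.rpow_nonneg (hF0 r hr) _),
      ENNReal.ofReal_rpow_of_nonneg (hF0 r hr) (by linarith)]
  refine ENNReal.le_rpow_mul_of_le_mul_rpow_mul_rpow hpos (hI ▸ ENNReal.ofReal_ne_top) ?_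
  calc ∫⁻ r in Ioc a R, ENNReal.ofReal (F r) ^ p
      ≤ ENNReal.ofReal (p * ∫ r in a..R, F r ^ (p - 1) * (g r * (b - r))) :=
        hI ▸ ENNReal.ofReal_le_ofReal (integral_primitive_rpow_le hp hg hg0 haR hRb)
    _ = ENNReal.ofReal p * ∫⁻ r in Ioc a R, (ENNReal.ofReal (F r) ^ p) ^ ((p - 1) / p) *
        (ENNReal.ofReal (g r * (b - r)) ^ p) ^ (1 / p) := by
      rw [ENNReal.ofReal_mul hpos.le, hJ]
    _ ≤ _ := by
      gcongr
      exact ENNReal.lintegral_mul_norm_pow_le (hFm.pow_const p) (hwm.pow_const p)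
        (div_nonneg (by linarith) hpos.le) (by positivity) (by field_simp; ring)

theorem setLIntegral_Ioo_primitive_rpow_le (hp : 1 ≤ p) (hg : ContinuousOn g (Ico a b))
    (hg0 : ∀ r ∈ Ico a b, 0 ≤ g r) :
    ∫⁻ r in Ioo a b, ENNReal.ofReal (∫ s in a..r, g s) ^ p ≤
      ENNReal.ofReal p ^ p * ∫⁻ r in Ioo a b, ENNReal.ofReal (g r * (b - r)) ^ p := by
  refine setLIntegral_Ioo_le_of_forall_Ioc_le fun R hRb => ?_
  rcases le_or_gt a R with haR | hRa
  · refine (setLIntegral_Ioc_primitive_rpow_le hp hg hg0 haR hRb).trans ?_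
    gcongr
  · simp [Ioc_eq_empty_of_le hRa.le]

end Hardy

section

variable {E : Type*} [NormedAddCommGroup E] [NormedSpace ℝ E] [CompleteSpace E]
  {φ φ' : ℝ → E} {a b : ℝ}

theorem norm_le_norm_add_integral_norm_deriv (hφ : ∀ x ∈ Ico a b, HasDerivAt φ (φ' x) x)
    (hφ' : ContinuousOn φ' (Ico a b)) {r : ℝ} (hr : r ∈ Ico a b) :
    ‖φ r‖ ≤ ‖φ a‖ + ∫ s in a..r, ‖φ' s‖ := by
  have hsub : uIcc a r ⊆ Ico a b := by
    rw [uIcc_of_le hr.1]; exact Icc_subset_Ico_right hr.2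
  have hFTC := integral_eq_sub_of_hasDerivAt (fun x hx => hφ x (hsub hx))
    ((hφ'.mono hsub).intervalIntegrable)
  calc ‖φ r‖ = ‖φ a + ∫ s in a..r, φ' s‖ := by rw [hFTC, add_sub_cancel]
    _ ≤ ‖φ a‖ + ‖∫ s in a..r, φ' s‖ := norm_add_le _ _
    _ ≤ ‖φ a‖ + ∫ s in a..r, ‖φ' s‖ := by gcongr; exact norm_integral_le_integral_norm hr.1

theorem lintegral_norm_rpow_le_of_hasDerivAt {p : ℝ} (hp : 1 ≤ p) (hab : a ≤ b)
    (hφ : ∀ x ∈ Ico a b, HasDerivAt φ (φ' x) x) (hφ' : ContinuousOn φ' (Ico a b)) :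
    (∫⁻ r in Ioo a b, ENNReal.ofReal (‖φ r‖ ^ p)) ^ (1 / p) ≤
      ENNReal.ofReal p * (∫⁻ r in Ioo a b, ENNReal.ofReal (‖φ' r‖ ^ p * (b - r) ^ p)) ^ (1 / p)
      + ENNReal.ofReal ((b - a) ^ (1 / p) * ‖φ a‖) := by
  have hpos : 0 < p := by linarith
  set F : ℝ → ℝ := fun r => ∫ s in a..r, ‖φ' s‖
  have hg : ContinuousOn (fun r => ‖φ' r‖) (Ico a b) := hφ'.norm
  have hFm : AEMeasurable (fun r => ENNReal.ofReal (F r)) (volume.restrict (Ioo a b)) :=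
    (ContinuousOn.aemeasurable (fun r hr =>
      (hasDerivAt_primitive_of_continuousOn hg hr).continuousAt.continuousWithinAt)
      measurableSet_Ioo).ennreal_ofReal
  have hpt : ∀ r ∈ Ioo a b,
      ENNReal.ofReal (‖φ r‖ ^ p) ≤ (ENNReal.ofReal (F r) + ENNReal.ofReal ‖φ a‖) ^ p := by
    intro r hr
    rw [← ENNReal.ofReal_rpow_of_nonneg (norm_nonneg _) hpos.le,
      ← ENNReal.ofReal_add (integral_nonneg hr.1.le fun _ _ => norm_nonneg _) (norm_nonneg _)]
    gcongr
    linarith [norm_le_norm_add_integral_norm_deriv hφ hφ' (Ioo_subset_Ico_self hr)]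
  have hroot : ∀ x y : ℝ≥0∞, (x ^ p * y) ^ (1 / p) = x * y ^ (1 / p) := fun x y => by
    rw [ENNReal.mul_rpow_of_nonneg _ _ (by positivity), ← ENNReal.rpow_mul,
      mul_one_div_cancel hpos.ne', ENNReal.rpow_one]
  calc (∫⁻ r in Ioo a b, ENNReal.ofReal (‖φ r‖ ^ p)) ^ (1 / p)
      ≤ (∫⁻ r in Ioo a b, (ENNReal.ofReal (F r) + ENNReal.ofReal ‖φ a‖) ^ p) ^ (1 / p) := by
        gcongr ?_ ^ _
        exact setLIntegral_mono' measurableSet_Ioo hpt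
    _ ≤ (∫⁻ r in Ioo a b, ENNReal.ofReal (F r) ^ p) ^ (1 / p) +
          (∫⁻ _ in Ioo a b, ENNReal.ofReal ‖φ a‖ ^ p) ^ (1 / p) :=
        ENNReal.lintegral_Lp_add_le hFm aemeasurable_const hp
    _ ≤ ENNReal.ofReal p * (∫⁻ r in Ioo a b, ENNReal.ofReal (‖φ' r‖ * (b - r)) ^ p) ^ (1 / p)
          + ENNReal.ofReal ((b - a) ^ (1 / p) * ‖φ a‖) := by
        gcongr
        · rw [← hroot]
          gcongr
          exact setLIntegral_Ioo_primitive_rpow_le hp hg fun _ _ => norm_nonneg _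
        · rw [setLIntegral_const, Real.volume_Ioo, hroot,
            ENNReal.ofReal_rpow_of_nonneg (by linarith) (by positivity),
            ← ENNReal.ofReal_mul (norm_nonneg _), mul_comm]
    _ = _ := by
        congr 3
        refine setLIntegral_congr_fun measurableSet_Ioo fun r hr => ?_
        rw [ENNReal.ofReal_rpow_of_nonneg (mul_nonneg (norm_nonneg _) (by linarith [hr.2]))
          hpos.le, Real.mul_rpow (norm_nonneg _) (by linarith [hr.2])]

end

theorem hasDerivAt_comp_ofReal_mul {f : ℂ → ℂ} {c : ℂ} {r : ℝ} (hf : DifferentiableAt ℂ f (r * c)) :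
    HasDerivAt (fun t : ℝ => f (t * c)) (deriv f (r * c) * c) r :=
  (hf.hasDerivAt.comp (r : ℂ) (hasDerivAt_mul_const c)).comp_ofReal

theorem stmt2_general (p : ℝ) (hp : 1 ≤ p) (f : ℂ → ℂ)
    (hf : DifferentiableOn ℂ f (ball (0:ℂ) 1))
    (ρ : ℝ) (hρ : ρ ∈ Ico (0:ℝ) 1) (θ : ℝ) :
    (∫⁻ r in Ioc ρ 1, ENNReal.ofReal (‖f (circ r θ)‖ ^ p)) ^ (1/p) ≤
      ENNReal.ofReal p *
        (∫⁻ r in Ioc ρ 1, ENNReal.ofReal (‖deriv f (circ r θ)‖ ^ p * (1-r) ^ p)) ^ (1/p)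
      + ENNReal.ofReal ((1-ρ) ^ (1/p) * ‖f (circ ρ θ)‖) := by
  set c := Complex.exp (θ * Complex.I)
  have hc : ‖c‖ = 1 := Complex.norm_exp_ofReal_mul_I θ
  have hball : MapsTo (circ · θ) (Ico ρ 1) (ball 0 1) := fun r hr => by
    simp only [circ, mem_ball_zero_iff, norm_mul, Complex.norm_real, Real.norm_eq_abs,
      Complex.norm_exp_ofReal_mul_I, mul_one, abs_lt]
    constructor <;> linarith [hr.1, hr.2, hρ.1]
  have hderiv : ∀ r ∈ Ico ρ 1, HasDerivAt (fun t => f (circ t θ)) (deriv f (circ r θ) * c) r :=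
    fun r hr => hasDerivAt_comp_ofReal_mul (hf.differentiableAt (isOpen_ball.mem_nhds (hball hr)))
  have hcont : ContinuousOn (fun r => deriv f (circ r θ) * c) (Ico ρ 1) :=
    (((hf.deriv isOpen_ball).continuousOn.comp (by unfold circ; fun_prop) hball).mul
      continuousOn_const)
  have key := lintegral_norm_rpow_le_of_hasDerivAt hp hρ.2.le hderiv hcont
  simp only [norm_mul, hc, mul_one] at key
  rwa [Measure.restrict_congr_set Ioo_ae_eq_Ioc] at key

/-- For `1 ≤ p < ∞`, `f` analytic on the unit disc, `ρ ∈ [0,1)` and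
`θ ∈ [0,2π]`:
`(∫_ρ¹ |f(re^{iθ})|^p dr)^{1/p}
  ≤ p (∫_ρ¹ |f'(re^{iθ})|^p (1-r)^p dr)^{1/p} + (1-ρ)^{1/p} |f(ρe^{iθ})|`. -/
theorem stmt2 (p : ℝ) (hp : 1 ≤ p) (f : ℂ → ℂ)
    (hf : DifferentiableOn ℂ f (ball (0:ℂ) 1))
    (ρ : ℝ) (hρ : ρ ∈ Ico (0:ℝ) 1) (θ : ℝ) (hθ : θ ∈ Icc (0:ℝ) (2*Real.pi)) :
    (∫⁻ r in Ioc ρ 1, ENNReal.ofReal (‖f (circ r θ)‖ ^ p)) ^ (1/p) ≤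
      ENNReal.ofReal p *
        (∫⁻ r in Ioc ρ 1, ENNReal.ofReal (‖deriv f (circ r θ)‖ ^ p * (1-r) ^ p)) ^ (1/p)
      + ENNReal.ofReal ((1-ρ) ^ (1/p) * ‖f (circ ρ θ)‖) :=
  stmt2_general p hp f hf ρ hρ θ
end

section
/- Let ε ∈ (0,1), a ∈ ℝ, and define u(z) = ε²/(z-(1+ε)e^{ia})³ for z in the unit disc 𝔻. Then for every θ with |θ - a| ≤ π one has ∫₀¹ |u(re^{iθ})| dr ≤ min{1, 8ε²/|θ-a|²}. -/
/-!
Put `s = θ - a` and `ρ = 1 + ε`. By the law of cosines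
`|u(re^{iθ})| = ε² / (r² - 2rρ cos s + ρ²)^{3/2}`. The first bound follows from
`|re^{iθ} - ρe^{ia}| ≥ ρ - r` and `∫₀¹ (ρ - r)⁻³ dr < 1 / (2ε²)`. For the second, the
denominator only decreases when `ρ` is replaced by `1` and `cos s` by any `c ≥ cos s`; since
`(r - c) / √(r² - 2rc + 1)` is an antiderivative of `(1 - c²) (r² - 2rc + 1)^{-3/2}`, the
integral is then at most `ε² / (1 - c)`, and Jordan's inequality `1 - cos s ≥ 2s²/π²` concludes.
-/

open Set

open Real intervalIntegral

lemma norm_circ_sub_mul_exp (r θ ρ a : ℝ) :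
    ‖circ r θ - ρ * Complex.exp (a * Complex.I)‖ =
      √(r ^ 2 - 2 * r * ρ * cos (θ - a) + ρ ^ 2) := by
  rw [← Real.sqrt_sq (norm_nonneg _), Complex.sq_norm, Complex.normSq_apply, cos_sub]
  congr 1
  simp only [circ, Complex.sub_re, Complex.sub_im, Complex.re_ofReal_mul, Complex.im_ofReal_mul,
    Complex.exp_ofReal_mul_I_re, Complex.exp_ofReal_mul_I_im]
  linear_combination r ^ 2 * sin_sq_add_cos_sq θ + ρ ^ 2 * sin_sq_add_cos_sq a

lemma sub_le_norm_circ_sub_mul_exp {r ρ : ℝ} (hr : 0 ≤ r) (hρ : 0 ≤ ρ) (θ a : ℝ) :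
    ρ - r ≤ ‖circ r θ - ρ * Complex.exp (a * Complex.I)‖ := by
  rw [norm_circ_sub_mul_exp]
  apply Real.le_sqrt_of_sq_le
  nlinarith [cos_le_one (θ - a), mul_nonneg hr hρ]

lemma sqrt_le_norm_circ_sub_mul_exp {r ρ c : ℝ} (hr : r ∈ Icc (0 : ℝ) 1) (hρ : 1 ≤ ρ)
    (θ a : ℝ) (hc : cos (θ - a) ≤ c) :
    √(r ^ 2 - 2 * r * c + 1) ≤ ‖circ r θ - ρ * Complex.exp (a * Complex.I)‖ := by
  rw [norm_circ_sub_mul_exp]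
  apply Real.sqrt_le_sqrt
  have hrc : r * cos (θ - a) ≤ 1 := by
    nlinarith [mul_le_mul_of_nonneg_left (cos_le_one (θ - a)) hr.1, hr.2]
  nlinarith [mul_nonneg (sub_nonneg.2 hρ) (by linarith : 0 ≤ ρ + 1 - 2 * (r * cos (θ - a))),
    mul_nonneg hr.1 (sub_nonneg.2 hc)]

lemma continuous_norm_circ_sub (θ : ℝ) (w : ℂ) : Continuous fun r => ‖circ r θ - w‖ := by
  unfold circ; fun_prop

lemma integral_inv_pow_three_le_of_le {f g : ℝ → ℝ} {a b : ℝ} (hab : a ≤ b)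
    (hf : ContinuousOn f (Icc a b)) (hg : ContinuousOn g (Icc a b))
    (hg0 : ∀ r ∈ Icc a b, 0 < g r) (hgf : ∀ r ∈ Icc a b, g r ≤ f r) :
    ∫ r in a..b, (f r ^ 3)⁻¹ ≤ ∫ r in a..b, (g r ^ 3)⁻¹ := by
  have hinv : ∀ {h : ℝ → ℝ}, ContinuousOn h (Icc a b) → (∀ r ∈ Icc a b, 0 < h r) →
      IntervalIntegrable (fun r => (h r ^ 3)⁻¹) MeasureTheory.volume a b := fun hh hh0 =>
    ((hh.pow 3).inv₀ fun r hr => (pow_pos (hh0 r hr) 3).ne').intervalIntegrable_of_Icc hab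
  have hf0 : ∀ r ∈ Icc a b, 0 < f r := fun r hr => (hg0 r hr).trans_le (hgf r hr)
  refine integral_mono_on hab (hinv hf hf0) (hinv hg hg0) fun r hr => ?_
  exact inv_anti₀ (pow_pos (hg0 r hr) 3) (pow_le_pow_left₀ (hg0 r hr).le (hgf r hr) 3)

lemma integral_inv_sub_pow_three {ρ : ℝ} (hρ : 1 < ρ) :
    ∫ r in (0 : ℝ)..1, ((ρ - r) ^ 3)⁻¹ = (((ρ - 1) ^ 2)⁻¹ - (ρ ^ 2)⁻¹) / 2 := by
  have h0 : (0 : ℝ) ∉ uIcc (ρ - 1) ρ := by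
    rw [uIcc_of_le (by linarith)]; exact fun h => by linarith [h.1]
  rw [integral_comp_sub_left (fun x => (x ^ 3)⁻¹), sub_zero]
  simp_rw [← zpow_natCast, ← zpow_neg]
  rw [integral_zpow (Or.inr ⟨by norm_num, h0⟩)]
  norm_num
  ring

lemma sq_sub_two_mul_add_one_pos {c : ℝ} (hc : c ∈ Ioo (-1 : ℝ) 1) (r : ℝ) :
    0 < r ^ 2 - 2 * r * c + 1 := by
  nlinarith [sq_nonneg (r - c), hc.1, hc.2]

lemma hasDerivAt_sub_div_sqrt {c : ℝ} (hc : c ∈ Ioo (-1 : ℝ) 1) (r : ℝ) :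
    HasDerivAt (fun x => (x - c) / √(x ^ 2 - 2 * x * c + 1))
      ((1 - c ^ 2) * (√(r ^ 2 - 2 * r * c + 1) ^ 3)⁻¹) r := by
  have hQ := sq_sub_two_mul_add_one_pos hc r
  have hQ' : HasDerivAt (fun x => x ^ 2 - 2 * x * c + 1) (2 * r - 2 * c) r := by
    refine ((hasDerivAt_pow 2 r).sub ((hasDerivAt_id' r).const_mul 2 |>.mul_const c)
      |>.add_const 1).congr_deriv ?_
    ring
  refine ((hasDerivAt_id' r |>.sub_const c).div (hQ'.sqrt hQ.ne') (sqrt_ne_zero'.2 hQ)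
    ).congr_deriv ?_
  have hs := sq_sqrt hQ.le
  have hs0 := sqrt_ne_zero'.2 hQ
  generalize √(r ^ 2 - 2 * r * c + 1) = s at hs hs0 ⊢
  field_simp
  linear_combination hs

lemma integral_inv_sqrt_pow_three_le {c : ℝ} (hc : c ∈ Ioo (-1 : ℝ) 1) :
    ∫ r in (0 : ℝ)..1, (√(r ^ 2 - 2 * r * c + 1) ^ 3)⁻¹ ≤ (1 - c)⁻¹ := by
  have hFTC : (1 - c ^ 2) * ∫ r in (0 : ℝ)..1, (√(r ^ 2 - 2 * r * c + 1) ^ 3)⁻¹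
      = (1 - c) / √(2 - 2 * c) + c := by
    rw [← integral_const_mul, integral_eq_sub_of_hasDerivAt
      (fun r _ => hasDerivAt_sub_div_sqrt hc r)]
    · norm_num
      ring_nf
    · exact (continuous_const.mul (Continuous.inv₀ (by fun_prop) fun r =>
        (pow_pos (sqrt_pos.2 (sq_sub_two_mul_add_one_pos hc r)) 3).ne')).intervalIntegrable 0 1
  have hle : (1 - c) / √(2 - 2 * c) ≤ 1 :=
    div_le_one_of_le₀ (Real.le_sqrt_of_sq_le (by nlinarith [hc.1, hc.2])) (sqrt_nonneg _)
  rw [← one_div, le_div_iff₀ (by linarith [hc.2])]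
  nlinarith [hc.1, hc.2]

lemma integral_inv_norm_circ_sub_pow_three_le {ρ : ℝ} (hρ : 1 < ρ) (θ a : ℝ) :
    ∫ r in (0 : ℝ)..1, (‖circ r θ - ρ * Complex.exp (a * Complex.I)‖ ^ 3)⁻¹
      ≤ ((ρ - 1) ^ 2)⁻¹ / 2 := by
  calc ∫ r in (0 : ℝ)..1, (‖circ r θ - ρ * Complex.exp (a * Complex.I)‖ ^ 3)⁻¹
      ≤ ∫ r in (0 : ℝ)..1, ((ρ - r) ^ 3)⁻¹ :=
        integral_inv_pow_three_le_of_le zero_le_one (continuous_norm_circ_sub θ _).continuousOn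
          (by fun_prop) (fun r hr => by linarith [hr.2])
          (fun r hr => sub_le_norm_circ_sub_mul_exp hr.1 (by linarith) θ a)
    _ = (((ρ - 1) ^ 2)⁻¹ - (ρ ^ 2)⁻¹) / 2 := integral_inv_sub_pow_three hρ
    _ ≤ ((ρ - 1) ^ 2)⁻¹ / 2 := by gcongr; exact sub_le_self _ (by positivity)

lemma integral_inv_norm_circ_sub_pow_three_le_div_sq {ρ θ a : ℝ} (hρ : 1 ≤ ρ)
    (hθ : |θ - a| ≤ π) (hθa : θ ≠ a) :
    ∫ r in (0 : ℝ)..1, (‖circ r θ - ρ * Complex.exp (a * Complex.I)‖ ^ 3)⁻¹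
      ≤ 8 / (θ - a) ^ 2 := by
  set c := cos (θ - a)
  have hpos : 0 < (θ - a) ^ 2 := by have := sub_ne_zero.2 hθa; positivity
  have hcos : 2 * (θ - a) ^ 2 ≤ π ^ 2 * (1 - c) := by
    have hcancel : π ^ 2 * (2 / π ^ 2 * (θ - a) ^ 2) = 2 * (θ - a) ^ 2 := by field_simp
    nlinarith [mul_le_mul_of_nonneg_left (cos_le_one_sub_mul_cos_sq hθ) (sq_nonneg π)]
  have hc1 : c < 1 := by nlinarith [pi_pos]
  -- Comparing with `(1 + 3c) / 4` instead of `c` keeps away from `-1`, where the antiderivative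
  -- degenerates, and only costs a factor `4 / 3`, which `π² < 12` absorbs.
  have hc' : (1 + 3 * c) / 4 ∈ Ioo (-1 : ℝ) 1 :=
    ⟨by linarith [neg_one_le_cos (θ - a)], by linarith⟩
  calc ∫ r in (0 : ℝ)..1, (‖circ r θ - ρ * Complex.exp (a * Complex.I)‖ ^ 3)⁻¹
      ≤ ∫ r in (0 : ℝ)..1, (√(r ^ 2 - 2 * r * ((1 + 3 * c) / 4) + 1) ^ 3)⁻¹ :=
        integral_inv_pow_three_le_of_le zero_le_one (continuous_norm_circ_sub θ _).continuousOn
          (by fun_prop) (fun r _ => sqrt_pos.2 (sq_sub_two_mul_add_one_pos hc' r))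
          (fun r hr => sqrt_le_norm_circ_sub_mul_exp hr hρ θ a (by linarith))
    _ ≤ (1 - (1 + 3 * c) / 4)⁻¹ := integral_inv_sqrt_pow_three_le hc'
    _ ≤ 8 / (θ - a) ^ 2 := by
        rw [inv_eq_one_div, div_le_div_iff₀ (by linarith) hpos]
        have hπ : π ^ 2 < 12 := by nlinarith [pi_pos, pi_lt_d2]
        nlinarith [mul_le_mul_of_nonneg_right hπ.le (sub_nonneg.2 hc1.le)]

/-- Let `ε ∈ (0,1)`, `a ∈ ℝ`, `u(z) = ε²/(z-(1+ε)e^{ia})³`. Then for every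
`θ` with `|θ-a| ≤ π`, `∫₀¹ |u(re^{iθ})| dr ≤ min{1, 8ε²/|θ-a|²}` (the second bound being
relevant only when `θ ≠ a`). -/
theorem stmt17 (ε : ℝ) (hε : ε ∈ Ioo (0:ℝ) 1) (a : ℝ)
    (u : ℂ → ℂ)
    (hu : u = fun z => (ε:ℂ)^2 / (z - (1+ε) * Complex.exp (a * Complex.I))^3)
    (θ : ℝ) (hθ : |θ - a| ≤ Real.pi) :
    (∫ r in (0:ℝ)..1, ‖u (circ r θ)‖) ≤ 1 ∧
      (θ ≠ a → (∫ r in (0:ℝ)..1, ‖u (circ r θ)‖) ≤ 8*ε^2/|θ - a|^2) := by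
  have hε0 : 0 < ε := hε.1
  have hu_norm : ∀ r, ‖u (circ r θ)‖
      = ε ^ 2 * (‖circ r θ - ((1 + ε : ℝ) : ℂ) * Complex.exp (a * Complex.I)‖ ^ 3)⁻¹ :=
    fun r => by simp [hu, div_eq_mul_inv, abs_of_pos hε0]
  simp_rw [hu_norm, integral_const_mul]
  refine ⟨?_, fun hθa => ?_⟩
  · calc ε ^ 2 * _ ≤ ε ^ 2 * (((1 + ε - 1) ^ 2)⁻¹ / 2) := by
          gcongr; exact integral_inv_norm_circ_sub_pow_three_le (by linarith) θ a
      _ ≤ 1 := by rw [add_sub_cancel_left]; field_simp; norm_num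
  · calc ε ^ 2 * _ ≤ ε ^ 2 * (8 / (θ - a) ^ 2) := by
          gcongr; exact integral_inv_norm_circ_sub_pow_three_le_div_sq (by linarith) hθ hθa
      _ = 8 * ε ^ 2 / |θ - a| ^ 2 := by rw [sq_abs]; ring
end
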